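/- arXiv:2508.06740 — 3 statements merged into one kernel-verified Lean document; each statement's English description precedes it below -/
import Mathlib

section
/- Let k be a commutative ring and α a composition of n. Then ∏_{j ∈ n_α(CF)} (B_α − j·1) = 0 in k[S_n], where the product ranges over the distinct elements j of the finite set n_α(CF) of knapsack numbers. -/
open scoped Classical

noncomputable section

namespace CardShuffle

/-- The descent set of a permutation of `Fin n`, recorded with 1-based positions:
`i ∈ Des w` iff `1 ≤ i ≤ n-1` and (in 1-based terms) `w(i) > w(i+1)`. -/
def Des {n : ℕ} (w : Equiv.Perm (Fin n)) : Finset ℕ :=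
  (Finset.Ico 1 n).filter fun i =>
    ∃ h : i < n, w ⟨i, h⟩ < w ⟨i - 1, Nat.lt_of_le_of_lt (Nat.sub_le i 1) h⟩

/-- The element `B_I` of the group algebra. -/
def BElt (k : Type*) [CommRing k] (n : ℕ) (I : Finset ℕ) :
    MonoidAlgebra k (Equiv.Perm (Fin n)) :=
  ∑ w ∈ Finset.univ.filter fun w : Equiv.Perm (Fin n) => Des w ⊆ I,
    MonoidAlgebra.of k (Equiv.Perm (Fin n)) w

/-- The element `D_I` of the group algebra. -/
def DElt (k : Type*) [CommRing k] (n : ℕ) (I : Finset ℕ) :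
    MonoidAlgebra k (Equiv.Perm (Fin n)) :=
  ∑ w ∈ Finset.univ.filter fun w : Equiv.Perm (Fin n) => Des w = I,
    MonoidAlgebra.of k (Equiv.Perm (Fin n)) w

/-- The longest element `w₀` (i.e. `i ↦ n+1-i` in 1-based terms) as an element of the
group algebra. -/
def w0elt (k : Type*) [CommRing k] (n : ℕ) : MonoidAlgebra k (Equiv.Perm (Fin n)) :=
  MonoidAlgebra.of k (Equiv.Perm (Fin n)) Fin.revPerm

/-- `gapsInv α = gaps⁻¹(α)`: the set of partial sums `α₁+⋯+α_i` for `1 ≤ i ≤ ℓ(α)-1`,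
a subset of `[n-1] = {1,…,n-1}`. -/
def gapsInv {n : ℕ} (α : Composition n) : Finset ℕ :=
  (Finset.Ico 1 α.length).image α.sizeUpTo

/-- The element `B_α := B_{gaps⁻¹(α)}` for a composition `α` of `n`. -/
def BComp (k : Type*) [CommRing k] {n : ℕ} (α : Composition n) :
    MonoidAlgebra k (Equiv.Perm (Fin n)) :=
  BElt k n (gapsInv α)

/-- The reverse of a composition. -/
def revComp {n : ℕ} (α : Composition n) : Composition n where
  blocks := α.blocks.reverse
  blocks_pos := by intro i h; exact α.blocks_pos (List.mem_reverse.mp h)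
  blocks_sum := by rw [List.sum_reverse]; exact α.blocks_sum

/-- A set composition (face) of `[n]`: an ordered tuple of pairwise disjoint nonempty
subsets of `[n]` whose union is `[n]`. -/
structure SetComp (n : ℕ) where
  blocks : List (Finset (Fin n))
  nonempty : ∀ B ∈ blocks, B.Nonempty
  pairwiseDisjoint : blocks.Pairwise Disjoint
  cover : ∀ x : Fin n, ∃ B ∈ blocks, x ∈ B

namespace SetComp

variable {n : ℕ}

/-- The length (number of blocks) of a set composition. -/
abbrev len (F : SetComp n) : ℕ := F.blocks.length

/-- Containment of faces: `F.le G` (i.e. `F ⊑ G`) iff every block of `F` is a subset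
of some block of `G`. -/
def le (F G : SetComp n) : Prop := ∀ B ∈ F.blocks, ∃ C ∈ G.blocks, B ⊆ C

/-- The type of a set composition, as the list of sizes of its blocks. -/
def typeList (F : SetComp n) : List ℕ := F.blocks.map Finset.card

/-- The product of two set compositions: the list of all nonempty intersections
`F_i ∩ G_j`, in lexicographically increasing order of `(i,j)`. -/
def mul (F G : SetComp n) : SetComp n where
  blocks := ((F.blocks.map fun B => G.blocks.map fun C => B ∩ C).flatten).filter
      fun S => S.Nonempty
  nonempty := by
    intro B hB
    simpa using (List.mem_filter.mp hB).2
  pairwiseDisjoint := by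
    apply List.Pairwise.filter
    rw [List.pairwise_flatten]
    constructor
    · intro l hl
      rw [List.mem_map] at hl
      obtain ⟨B, hB, rfl⟩ := hl
      rw [List.pairwise_map]
      exact G.pairwiseDisjoint.imp fun h =>
        h.mono Finset.inter_subset_right Finset.inter_subset_right
    · rw [List.pairwise_map]
      refine F.pairwiseDisjoint.imp ?_
      intro B B' h x hx y hy
      rw [List.mem_map] at hx hy
      obtain ⟨C, _, rfl⟩ := hx
      obtain ⟨C', _, rfl⟩ := hy
      exact h.mono Finset.inter_subset_left Finset.inter_subset_left
  cover := by
    intro x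
    obtain ⟨B, hB, hxB⟩ := F.cover x
    obtain ⟨C, hC, hxC⟩ := G.cover x
    refine ⟨B ∩ C, ?_, Finset.mem_inter.mpr ⟨hxB, hxC⟩⟩
    rw [List.mem_filter]
    constructor
    · rw [List.mem_flatten]
      exact ⟨_, List.mem_map_of_mem hB, List.mem_map_of_mem hC⟩
    · exact decide_eq_true ⟨x, Finset.mem_inter.mpr ⟨hxB, hxC⟩⟩

/-- The one-block set composition `([n])` (for `n = 0`, the empty set composition). -/
def one (n : ℕ) : SetComp n where
  blocks := if (Finset.univ : Finset (Fin n)).Nonempty then [Finset.univ] else []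
  nonempty := by
    intro B hB
    split at hB
    · rw [List.mem_singleton] at hB; subst hB; assumption
    · simp at hB
  pairwiseDisjoint := by split <;> simp
  cover := by
    intro x
    have h : (Finset.univ : Finset (Fin n)).Nonempty := ⟨x, Finset.mem_univ x⟩
    refine ⟨Finset.univ, ?_, Finset.mem_univ x⟩
    rw [if_pos h]
    exact List.mem_singleton.mpr rfl

end SetComp

/-- The knapsack number `n_α(F)`: the number of faces `G` with `F ⊑ G` and `type G = α`. -/
def knap {n : ℕ} (α : Composition n) (F : SetComp n) : ℕ :=
  Nat.card {G : SetComp n // F.le G ∧ G.typeList = α.blocks}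

/-- The signed knapsack number `ñ_α(F) = (-1)^(n - ℓ(F)) n_α(F)`. -/
def sknap {n : ℕ} (α : Composition n) (F : SetComp n) : ℤ :=
  (-1) ^ (n - F.len) * (knap α F : ℤ)

/-- The number of singleton (size-1) blocks of a set composition. -/
def sinF {n : ℕ} (F : SetComp n) : ℕ :=
  (F.blocks.filter fun B => B.card = 1).length

/-!
Write `B_U` for `BElt k n U`. Solomon's Mackey formula expands `B_α B_U` as the sum of
`B_{U ∪ J(φ)}` over the labellings `φ : [n] → [ℓ(α)]` of type `α` that are weakly increasing on
the runs of `U`, where `J(φ)` is the set of positions at which `φ` changes value. The labellings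
with `J(φ) ⊆ U` are those constant on the runs of `U`: there are `ν(U)` of them, the knapsack
number of the face whose blocks are these runs, and they contribute `ν(U) B_U`. Every other term
is a `B_T` with `T ⊋ U`, and then `ν(T) > ν(U)`. Hence `B_α` acts triangularly on the `B_U` with
knapsack numbers on the diagonal, so `∏_j (B_α - j)` kills every `B_U`, in particular `B_∅ = 1`.
-/

end CardShuffle

open Finset

namespace Composition

variable {n : ℕ} (c : Composition n)

lemma sizeUpTo_le_iff_le_index (i : ℕ) (p : Fin n) : c.sizeUpTo i ≤ p ↔ i ≤ c.index p := by
  refine ⟨fun h => not_lt.1 fun hlt => ?_,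
    fun h => (c.monotone_sizeUpTo h).trans (c.sizeUpTo_index_le p)⟩
  have := c.lt_sizeUpTo_index_succ p
  rw [Fin.val_succ] at this
  exact (h.trans_lt this).not_ge (c.monotone_sizeUpTo hlt)

lemma monotone_index : Monotone c.index := fun p q h =>
  (c.sizeUpTo_le_iff_le_index _ q).1 ((c.sizeUpTo_index_le p).trans h)

lemma card_index_fiber (j : Fin c.length) :
    Fintype.card {p // c.index p = j} = c.blocksFun j := by
  rw [Fintype.card_subtype, ← card_fin (c.blocksFun j), ← card_map (c.embedding j).toEmbedding]
  congr 1
  ext p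
  simp [← c.mem_range_embedding_iff', Set.mem_range, eq_comm]

end Composition

namespace CardShuffle

section FiberwiseStrictMono

variable {X Y ι : Type*}

def FiberwiseStrictMono [LT X] [LT Y] (κ : X → ι) (f : X → Y) : Prop :=
  ∀ ⦃x y⦄, κ x = κ y → x < y → f x < f y

lemma FiberwiseStrictMono.symm [LinearOrder X] [LinearOrder Y] {κ : X → ι} {ψ : Y → ι}
    {e : X ≃ Y} (he : ψ ∘ e = κ) (hmono : FiberwiseStrictMono κ e) :
    FiberwiseStrictMono ψ e.symm := by
  intro a b hab hlt
  have hκ : κ (e.symm a) = κ (e.symm b) := by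
    simpa only [← he, Function.comp_apply, Equiv.apply_symm_apply] using hab
  refine lt_of_le_of_ne (not_lt.1 fun hgt => ?_) (e.symm.injective.ne hlt.ne)
  exact hlt.asymm (by simpa using hmono hκ.symm hgt)

lemma range_restrict_fiber_eq {κ : X → ι} {ψ : Y → ι} {e : X ≃ Y} (he : ψ ∘ e = κ) (j : ι) :
    Set.range (fun x : {x // κ x = j} => e x) = {y | ψ y = j} := by
  ext y
  refine ⟨?_, fun hy => ⟨⟨e.symm y, ?_⟩, e.apply_symm_apply y⟩⟩
  · rintro ⟨⟨x, rfl⟩, rfl⟩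
    exact congrFun he x
  · simpa [← he] using hy

/-- On each fibre, both are the increasing enumeration of the same set. -/
lemma eq_of_comp_eq_of_fiberwiseStrictMono [LinearOrder X] [Finite X] [Preorder Y]
    {κ : X → ι} {ψ : Y → ι} {e e' : X ≃ Y} (he : ψ ∘ e = κ) (he' : ψ ∘ e' = κ)
    (hmono : FiberwiseStrictMono κ e) (hmono' : FiberwiseStrictMono κ e') : e = e' := by
  ext x
  have hsm : ∀ {f : X ≃ Y}, FiberwiseStrictMono κ f →
      StrictMono fun z : {z // κ z = κ x} => f z :=
    fun hf z z' hzz' => hf (z.2.trans z'.2.symm) hzz'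
  have hrange :=
    (range_restrict_fiber_eq he (κ x)).trans (range_restrict_fiber_eq he' (κ x)).symm
  exact congrFun ((hsm hmono).range_inj (hsm hmono') |>.1 hrange) ⟨x, rfl⟩

lemma exists_equiv_comp_eq_fiberwiseStrictMono [LinearOrder X] [LinearOrder Y] [Fintype X]
    [Fintype Y] [DecidableEq ι] (κ : X → ι) (ψ : Y → ι)
    (hcard : ∀ j, Fintype.card {x // κ x = j} = Fintype.card {y // ψ y = j}) :
    ∃ e : X ≃ Y, ψ ∘ e = κ ∧ FiberwiseStrictMono κ e := by
  let o : ∀ j, {x // κ x = j} ≃o {y // ψ y = j} := fun j =>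
    (Fintype.orderIsoFinOfCardEq _ rfl).symm.trans (Fintype.orderIsoFinOfCardEq _ (hcard j).symm)
  let e := Equiv.ofFiberEquiv fun j => (o j).toEquiv
  have he : ∀ {x j} (h : κ x = j), e x = o j ⟨x, h⟩ := by
    rintro x j rfl
    rfl
  refine ⟨e, funext (Equiv.ofFiberEquiv_map _), fun x y hxy hlt => ?_⟩
  rw [he hxy, he rfl]
  exact (o (κ y)).strictMono hlt

end FiberwiseStrictMono

section Runs

variable {n : ℕ}

/-- Ignoring a breakpoint at `0` keeps `runIndex U p ≤ p`. -/
def runIndex (U : Finset ℕ) (p : ℕ) : ℕ := #(U ∩ Ioc 0 p)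

lemma runIndex_le (U : Finset ℕ) (p : ℕ) : runIndex U p ≤ p :=
  (card_le_card inter_subset_right).trans (by simp)

lemma runIndex_mono (U : Finset ℕ) : Monotone (runIndex U) := fun _ _ h =>
  card_le_card (inter_subset_inter_left (Ioc_subset_Ioc_right h))

lemma runIndex_eq_iff {U : Finset ℕ} {p q : ℕ} (h : p ≤ q) :
    runIndex U p = runIndex U q ↔ ∀ s ∈ U, ¬(p < s ∧ s ≤ q) := by
  have hsplit : U ∩ Ioc 0 q = (U ∩ Ioc 0 p) ∪ (U ∩ Ioc p q) := by
    rw [← inter_union_distrib_left, Ioc_union_Ioc_eq_Ioc (Nat.zero_le p) h]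
  have hdisj : Disjoint (U ∩ Ioc 0 p) (U ∩ Ioc p q) :=
    (Ioc_disjoint_Ioc_of_le le_rfl).mono inter_subset_right inter_subset_right
  rw [runIndex, runIndex, hsplit, card_union_of_disjoint hdisj, left_eq_add, card_eq_zero,
    eq_empty_iff_forall_notMem]
  simp

lemma runIndex_eq_of_le_of_le {U : Finset ℕ} {p q r : ℕ} (hpq : p ≤ q) (hqr : q ≤ r)
    (h : runIndex U p = runIndex U r) : runIndex U p = runIndex U q :=
  le_antisymm (runIndex_mono U hpq) (h ▸ runIndex_mono U hqr)

lemma runIndex_eq_of_subset {U V : Finset ℕ} (hUV : U ⊆ V) {p q : ℕ}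
    (h : runIndex V p = runIndex V q) : runIndex U p = runIndex U q := by
  wlog hpq : p ≤ q
  · exact (this hUV h.symm (le_of_not_ge hpq)).symm
  exact (runIndex_eq_iff hpq).2 fun s hs => (runIndex_eq_iff hpq).1 h s (hUV hs)

lemma rel_of_runIndex_eq {β : Type*} (r : β → β → Prop) [IsTrans β r] {U : Finset ℕ}
    {f : Fin n → β}
    (hstep : ∀ (i : ℕ) (h : i + 1 < n), i + 1 ∉ U → r (f ⟨i, by omega⟩) (f ⟨i + 1, h⟩))
    {p q : Fin n} (hpq : p < q) (hrun : runIndex U p = runIndex U q) : r (f p) (f q) := by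
  obtain ⟨p, hp⟩ := p
  obtain ⟨q, hq⟩ := q
  simp only [Fin.mk_lt_mk] at hpq hrun ⊢
  induction q, hpq using Nat.le_induction with
  | base => exact hstep p hq ((runIndex_eq_iff (by omega)).1 hrun (p + 1) · ⟨by omega, le_rfl⟩)
  | succ q hpq ih =>
    have hq' : runIndex U p = runIndex U q := runIndex_eq_of_le_of_le (by omega) (by omega) hrun
    refine _root_.trans (ih (by omega) hq') (hstep q hq fun hmem => ?_)
    exact (runIndex_eq_iff (by omega)).1 hrun (q + 1) hmem ⟨by omega, le_rfl⟩

end Runs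

section Descents

variable {n : ℕ}

lemma mem_des {w : Equiv.Perm (Fin n)} {i : ℕ} :
    i ∈ Des w ↔ 1 ≤ i ∧ ∃ h : i < n, w ⟨i, h⟩ < w ⟨i - 1, by omega⟩ := by
  simp only [Des, mem_filter, mem_Ico]
  exact ⟨fun ⟨⟨h1, _⟩, h⟩ => ⟨h1, h⟩, fun ⟨h1, h, hlt⟩ => ⟨⟨h1, h⟩, h, hlt⟩⟩

lemma des_subset_iff {U : Finset ℕ} {w : Equiv.Perm (Fin n)} :
    Des w ⊆ U ↔ FiberwiseStrictMono (fun p : Fin n => runIndex U p) w := by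
  constructor
  · intro hdes p q hrun hpq
    refine rel_of_runIndex_eq (· < ·) (fun i h hi => ?_) hpq hrun
    have hne : w ⟨i, by omega⟩ ≠ w ⟨i + 1, h⟩ := fun heq => by simpa using w.injective heq
    refine hne.lt_of_le (not_lt.1 fun hlt => hi (hdes (mem_des.2 ⟨by omega, h, ?_⟩)))
    simpa using hlt
  · intro hinc i hi
    obtain ⟨h1, h, hlt⟩ := mem_des.1 hi
    by_contra hiU
    have hrun : runIndex U (i - 1) = runIndex U i :=
      (runIndex_eq_iff (by omega)).2 fun s hs hs' => hiU (by rwa [show i = s by omega])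
    exact (hinc hrun (Fin.mk_lt_mk.2 (by omega))).asymm hlt

lemma des_eq_empty_iff {w : Equiv.Perm (Fin n)} : Des w = ∅ ↔ w = 1 := by
  rw [← subset_empty, des_subset_iff]
  refine ⟨fun hw => Equiv.ext fun x => StrictMono.apply_eq fun p q hpq => ?_, ?_⟩
  · exact hw (by simp [runIndex]) hpq
  · rintro rfl _ _ _ h
    exact h

lemma runIndex_gapsInv (α : Composition n) (p : Fin n) :
    runIndex (gapsInv α) p = α.index p := by
  have hidx := (α.index p).2
  have hsm : StrictMonoOn α.sizeUpTo (Set.Iic α.length) :=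
    strictMonoOn_Iic_of_lt_succ fun m hm => by
      simpa [Order.succ_eq_add_one] using α.sizeUpTo_strict_mono hm
  have hset : gapsInv α ∩ Ioc 0 p = (Icc 1 (α.index p : ℕ)).image α.sizeUpTo := by
    rw [gapsInv, ← filter_mem_eq_inter, filter_image]
    congr 1
    ext i
    simp only [mem_filter, mem_Ico, mem_Icc, mem_Ioc, α.sizeUpTo_le_iff_le_index]
    refine ⟨fun ⟨⟨h1, _⟩, _, h⟩ => ⟨h1, h⟩, fun ⟨h1, h⟩ => ⟨⟨h1, by omega⟩, ?_, h⟩⟩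
    simpa [α.sizeUpTo_zero] using
      hsm (Set.mem_Iic.2 (Nat.zero_le _)) (Set.mem_Iic.2 (by omega)) (by omega : 0 < i)
  rw [runIndex, hset, card_image_of_injOn (hsm.injOn.mono fun i hi => by
    simp only [coe_Icc, Set.mem_Icc, Set.mem_Iic] at hi ⊢
    omega)]
  simp

lemma des_subset_gapsInv_iff {α : Composition n} {u : Equiv.Perm (Fin n)} :
    Des u ⊆ gapsInv α ↔ FiberwiseStrictMono α.index u := by
  simp only [des_subset_iff, runIndex_gapsInv, FiberwiseStrictMono, Fin.val_inj]

end Descents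

section Jumps

variable {n : ℕ} {β : Type*}

/-- Numbered like `Des`: `i` stands for the pair of positions `(i - 1, i)`. -/
def jumps (φ : Fin n → β) : Finset ℕ :=
  (Ico 1 n).filter fun i => ∃ h : i < n, φ ⟨i - 1, by omega⟩ ≠ φ ⟨i, h⟩

lemma mem_jumps {φ : Fin n → β} {i : ℕ} :
    i ∈ jumps φ ↔ 1 ≤ i ∧ ∃ h : i < n, φ ⟨i - 1, by omega⟩ ≠ φ ⟨i, h⟩ := by
  simp only [jumps, mem_filter, mem_Ico]
  exact ⟨fun ⟨⟨h1, _⟩, h⟩ => ⟨h1, h⟩, fun ⟨h1, h, hne⟩ => ⟨⟨h1, h⟩, h, hne⟩⟩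

lemma jumps_subset_iff {φ : Fin n → β} {U : Finset ℕ} :
    jumps φ ⊆ U ↔ ∀ x y : Fin n, runIndex U x = runIndex U y → φ x = φ y := by
  constructor
  · intro hJ x y hrun
    have step : ∀ (i : ℕ) (h : i + 1 < n), i + 1 ∉ U → φ ⟨i, by omega⟩ = φ ⟨i + 1, h⟩ :=
      fun i h hi => not_not.1 fun hne => hi (hJ (mem_jumps.2 ⟨by omega, h, by simpa using hne⟩))
    rcases lt_trichotomy x y with hlt | rfl | hgt
    · exact rel_of_runIndex_eq (· = ·) step hlt hrun
    · rfl
    · exact (rel_of_runIndex_eq (· = ·) step hgt hrun.symm).symm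
  · intro hconst i hi
    obtain ⟨h1, h, hne⟩ := mem_jumps.1 hi
    by_contra hiU
    refine hne (hconst _ _ ((runIndex_eq_iff (by simp)).2 fun s hs hs' => hiU ?_))
    rwa [show i = s by simp at hs'; omega]

lemma runIndex_union_jumps_eq [PartialOrder β] {φ : Fin n → β} {U : Finset ℕ}
    (hmono : ∀ x y : Fin n, x ≤ y → runIndex U x = runIndex U y → φ x ≤ φ y) {x y : Fin n}
    (hxy : x ≤ y) (hrun : runIndex U x = runIndex U y) (hφ : φ x = φ y) :
    runIndex (U ∪ jumps φ) x = runIndex (U ∪ jumps φ) y := by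
  refine (runIndex_eq_iff hxy).2 fun s hs ⟨hxs, hsy⟩ => ?_
  rcases mem_union.1 hs with hs | hs
  · exact (runIndex_eq_iff hxy).1 hrun s hs ⟨hxs, hsy⟩
  obtain ⟨h1, h, hne⟩ := mem_jumps.1 hs
  have hx : runIndex U x = runIndex U (s - 1) :=
    runIndex_eq_of_le_of_le (by omega) (by omega) hrun
  have hy : runIndex U s = runIndex U y :=
    (runIndex_eq_of_le_of_le (by omega) hsy hrun).symm.trans hrun
  have h₁ := hmono x ⟨s - 1, by omega⟩ (Fin.mk_le_mk.2 (by omega)) hx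
  have h₂ := hmono ⟨s - 1, by omega⟩ ⟨s, h⟩ (Fin.mk_le_mk.2 (by omega))
    (hx.symm.trans (hrun.trans hy.symm))
  have h₃ := hmono ⟨s, h⟩ y hsy hy
  exact hne (le_antisymm h₂ (h₃.trans (hφ.symm.le.trans h₁)))

end Jumps

section Labelings

variable {n : ℕ}

def HasType (α : Composition n) (φ : Fin n → Fin α.length) : Prop :=
  ∀ j, Fintype.card {x // φ x = j} = α.blocksFun j

lemma HasType.fiber_nonempty {α : Composition n} {φ : Fin n → Fin α.length} (hφ : HasType α φ)
    (j : Fin α.length) : (univ.filter (φ · = j)).Nonempty := by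
  rw [← card_pos, ← Fintype.card_subtype, hφ j]
  exact α.one_le_blocksFun j

lemma HasType.comp_perm {α : Composition n} {φ : Fin n → Fin α.length} (hφ : HasType α φ)
    (e : Equiv.Perm (Fin n)) : HasType α (φ ∘ e) := fun j =>
  (Fintype.card_congr (e.subtypeEquiv fun _ => Iff.rfl)).trans (hφ j)

lemma hasType_index_comp (α : Composition n) (e : Equiv.Perm (Fin n)) :
    HasType α (α.index ∘ e) :=
  HasType.comp_perm α.card_index_fiber e

end Labelings

namespace SetComp

variable {n m : ℕ}

lemma ext_blocks {F G : SetComp n} (h : F.blocks = G.blocks) : F = G := by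
  cases F
  cases G
  cases h
  rfl

def SameBlock (F : SetComp n) (x y : Fin n) : Prop := ∃ B ∈ F.blocks, x ∈ B ∧ y ∈ B

def ofFun (κ : Fin n → Fin m) : SetComp n where
  blocks := ((List.finRange m).map fun j => univ.filter (κ · = j)).filter (·.Nonempty)
  nonempty B hB := by simpa using (List.mem_filter.1 hB).2
  pairwiseDisjoint := by
    refine List.Pairwise.filter _ ?_
    rw [List.pairwise_map]
    exact (List.nodup_finRange m).imp fun hne =>
      disjoint_filter.2 fun _ _ h h' => hne (h.symm.trans h')
  cover x := ⟨univ.filter (κ · = κ x), List.mem_filter.2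
    ⟨List.mem_map.2 ⟨κ x, List.mem_finRange _, rfl⟩, decide_eq_true ⟨x, by simp⟩⟩, by simp⟩

lemma mem_ofFun_blocks {κ : Fin n → Fin m} {B : Finset (Fin n)} :
    B ∈ (ofFun κ).blocks ↔ B.Nonempty ∧ ∃ j, univ.filter (κ · = j) = B := by
  simp [ofFun, and_comm]

lemma sameBlock_ofFun {κ : Fin n → Fin m} {x y : Fin n} :
    (ofFun κ).SameBlock x y ↔ κ x = κ y := by
  simp only [SameBlock, mem_ofFun_blocks]
  constructor
  · rintro ⟨B, ⟨-, j, rfl⟩, hx, hy⟩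
    simp_all
  · intro h
    exact ⟨_, ⟨⟨x, by simp⟩, κ x, rfl⟩, by simp, by simp [h]⟩

lemma le_ofFun_iff {F : SetComp n} {κ : Fin n → Fin m} :
    F.le (ofFun κ) ↔ ∀ x y, F.SameBlock x y → κ x = κ y := by
  constructor
  · rintro hle x y ⟨B, hB, hx, hy⟩
    obtain ⟨C, hC, hBC⟩ := hle B hB
    exact sameBlock_ofFun.1 ⟨C, hC, hBC hx, hBC hy⟩
  · intro h B hB
    obtain ⟨x, hx⟩ := F.nonempty B hB
    refine ⟨univ.filter (κ · = κ x), mem_ofFun_blocks.2 ⟨⟨x, by simp⟩, _, rfl⟩, fun y hy => ?_⟩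
    simpa using (h x y ⟨B, hB, hx, hy⟩).symm

variable {α : Composition n} {φ : Fin n → Fin α.length}

lemma blocks_ofFun_of_hasType (hφ : HasType α φ) :
    (ofFun φ).blocks = (List.finRange α.length).map fun j => univ.filter (φ · = j) := by
  refine List.filter_eq_self.2 fun B hB => ?_
  obtain ⟨j, -, rfl⟩ := List.mem_map.1 hB
  simpa using hφ.fiber_nonempty j

lemma typeList_ofFun (hφ : HasType α φ) : (ofFun φ).typeList = α.blocks := by
  rw [typeList, blocks_ofFun_of_hasType hφ, List.map_map, ← α.ofFn_blocksFun, List.ofFn_eq_map]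
  congr 1
  funext j
  simp [← Fintype.card_subtype, hφ j]

lemma eq_of_ofFun_eq {φ' : Fin n → Fin α.length} (hφ : HasType α φ) (hφ' : HasType α φ')
    (h : ofFun φ = ofFun φ') : φ = φ' := by
  have hfib := List.map_inj_left.1 <| (blocks_ofFun_of_hasType hφ).symm.trans
    ((congrArg blocks h).trans (blocks_ofFun_of_hasType hφ'))
  funext x
  simpa [eq_comm] using (Finset.ext_iff.1 (hfib (φ x) (List.mem_finRange _)) x).1 (by simp)

lemma exists_hasType_ofFun_eq {G : SetComp n} (hG : G.typeList = α.blocks) :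
    ∃ φ, HasType α φ ∧ ofFun φ = G := by
  have hlen : G.blocks.length = α.length := by
    simpa [typeList] using congrArg List.length hG
  have hex : ∀ x, ∃ j : Fin α.length, x ∈ G.blocks[j.1] := fun x => by
    obtain ⟨B, hB, hx⟩ := G.cover x
    obtain ⟨i, hi, rfl⟩ := List.mem_iff_getElem.1 hB
    exact ⟨⟨i, hlen ▸ hi⟩, hx⟩
  choose φ hφ using hex
  have hfib : ∀ j, univ.filter (φ · = j) = G.blocks[j.1] := fun j => by
    ext x
    simp only [mem_filter, mem_univ, true_and]
    refine ⟨fun h => h ▸ hφ x, fun hx => by_contra fun hne => ?_⟩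
    have hdisj := List.pairwise_iff_getElem.1 G.pairwiseDisjoint
    rcases lt_or_gt_of_ne (Fin.val_injective.ne hne) with hlt | hlt
    · exact disjoint_left.1 (hdisj _ _ _ _ hlt) (hφ x) hx
    · exact disjoint_left.1 (hdisj _ _ _ _ hlt) hx (hφ x)
  have hcard : ∀ j : Fin α.length, (G.blocks[j.1]).card = α.blocksFun j := fun j => by
    simpa [typeList, Composition.blocksFun] using
      List.getElem_of_eq hG (by simp [typeList, hlen])
  have htype : HasType α φ := fun j => by rw [Fintype.card_subtype, hfib, hcard]
  refine ⟨φ, htype, ext_blocks ?_⟩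
  rw [blocks_ofFun_of_hasType htype]
  exact List.ext_getElem (by simp [hlen]) fun i _ _ => by simp [hfib]

end SetComp

open SetComp in
/-- A face of type `α` containing `F` is the same as a labelling of type `α` that is constant
on the blocks of `F`. -/
lemma knap_eq_card {n : ℕ} (α : Composition n) (F : SetComp n) :
    knap α F = #(univ.filter fun φ : Fin n → Fin α.length =>
      HasType α φ ∧ ∀ x y, F.SameBlock x y → φ x = φ y) := by
  let e : {φ : Fin n → Fin α.length // HasType α φ ∧ ∀ x y, F.SameBlock x y → φ x = φ y} →
      {G : SetComp n // F.le G ∧ G.typeList = α.blocks} :=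
    fun φ => ⟨ofFun φ.1, le_ofFun_iff.2 φ.2.2, typeList_ofFun φ.2.1⟩
  have he : e.Bijective := by
    refine ⟨fun φ ψ h => Subtype.ext (eq_of_ofFun_eq φ.2.1 ψ.2.1 (congrArg Subtype.val h)), ?_⟩
    rintro ⟨G, hle, hG⟩
    obtain ⟨φ, hφ, rfl⟩ := exists_hasType_ofFun_eq hG
    exact ⟨⟨φ, hφ, le_ofFun_iff.1 hle⟩, rfl⟩
  rw [knap, ← Nat.card_congr (Equiv.ofBijective e he), Nat.card_eq_fintype_card,
    Fintype.card_subtype]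

section RunLabelings

variable {n : ℕ} (α : Composition n)

def runMonoLabelings (U : Finset ℕ) : Finset (Fin n → Fin α.length) :=
  univ.filter fun φ =>
    HasType α φ ∧ ∀ x y : Fin n, x ≤ y → runIndex U x = runIndex U y → φ x ≤ φ y

def runConstLabelings (U : Finset ℕ) : Finset (Fin n → Fin α.length) :=
  univ.filter fun φ => HasType α φ ∧ ∀ x y : Fin n, runIndex U x = runIndex U y → φ x = φ y

lemma filter_runMonoLabelings_jumps_subset (U : Finset ℕ) :
    (runMonoLabelings α U).filter (jumps · ⊆ U) = runConstLabelings α U := by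
  ext φ
  simp only [runMonoLabelings, runConstLabelings, mem_filter, mem_univ, true_and,
    jumps_subset_iff]
  exact ⟨fun ⟨⟨hφ, _⟩, hc⟩ => ⟨hφ, hc⟩, fun ⟨hφ, hc⟩ => ⟨⟨hφ, fun x y _ h => (hc x y h).le⟩, hc⟩⟩

lemma card_runConstLabelings_lt {U : Finset ℕ} {φ : Fin n → Fin α.length} (hφ : HasType α φ)
    (hU : ¬ jumps φ ⊆ U) : #(runConstLabelings α U) < #(runConstLabelings α (U ∪ jumps φ)) := by
  refine card_lt_card ⟨fun ψ hψ => ?_, fun hsub => hU ?_⟩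
  · simp only [runConstLabelings, mem_filter, mem_univ, true_and] at hψ ⊢
    exact ⟨hψ.1, fun x y h => hψ.2 x y (runIndex_eq_of_subset subset_union_left h)⟩
  · have hmem : φ ∈ runConstLabelings α (U ∪ jumps φ) := by
      simpa [runConstLabelings, hφ] using jumps_subset_iff.1 (subset_union_right (s₁ := U))
    have := hsub hmem
    simp only [runConstLabelings, mem_filter, mem_univ, true_and] at this
    exact jumps_subset_iff.2 this.2

def runIndexFin (U : Finset ℕ) (p : Fin n) : Fin n :=
  ⟨runIndex U p, (runIndex_le U p).trans_lt p.2⟩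

lemma knap_ofFun_runIndexFin (U : Finset ℕ) :
    knap α (SetComp.ofFun (runIndexFin U)) = #(runConstLabelings α U) := by
  simp [knap_eq_card, SetComp.sameBlock_ofFun, runIndexFin, runConstLabelings]

end RunLabelings

section Bijection

variable {n : ℕ} {α : Composition n} {U : Finset ℕ}

lemma index_comp_mem_runMonoLabelings {v : Equiv.Perm (Fin n)} (hv : Des v ⊆ U) :
    α.index ∘ v ∈ runMonoLabelings α U := by
  rw [des_subset_iff] at hv
  simp only [runMonoLabelings, mem_filter, mem_univ, true_and]
  refine ⟨hasType_index_comp α v, fun x y hxy hrun => ?_⟩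
  rcases hxy.lt_or_eq with hlt | rfl
  · exact α.monotone_index (hv hrun hlt).le
  · rfl

lemma des_mul_subset {u v : Equiv.Perm (Fin n)} (hu : Des u ⊆ gapsInv α) (hv : Des v ⊆ U) :
    Des (u * v) ⊆ U ∪ jumps (α.index ∘ v) := by
  rw [des_subset_gapsInv_iff] at hu
  rw [des_subset_iff] at hv ⊢
  intro x y hrun hlt
  have hidx := jumps_subset_iff.1 (subset_union_right (s₁ := U)) x y hrun
  exact hu hidx (hv (runIndex_eq_of_subset subset_union_left hrun) hlt)

/-- `u` is the fibrewise increasing permutation carrying the blocks of `α` onto the fibres of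
`α.index ∘ u⁻¹`, and `α.index ∘ u⁻¹ = α.index ∘ v ∘ (u * v)⁻¹`. -/
lemma eq_of_index_comp_eq_of_mul_eq {u v u' v' : Equiv.Perm (Fin n)} (hu : Des u ⊆ gapsInv α)
    (hu' : Des u' ⊆ gapsInv α) (hidx : α.index ∘ v = α.index ∘ v') (hw : u * v = u' * v') :
    u = u' ∧ v = v' := by
  rw [des_subset_gapsInv_iff] at hu hu'
  have h₁ : (α.index ∘ u.symm) ∘ u = α.index := funext fun x => by simp
  have h₂ : (α.index ∘ u.symm) ∘ u' = α.index := funext fun y => by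
    have hy : u' y = u (v (v'.symm y)) := by
      simpa using (Equiv.Perm.ext_iff.1 hw (v'.symm y)).symm
    simpa [hy] using congrFun hidx (v'.symm y)
  have huu := eq_of_comp_eq_of_fiberwiseStrictMono h₁ h₂ hu hu'
  exact ⟨huu, mul_left_cancel (huu ▸ hw)⟩

lemma exists_mul_eq_of_mem_runMonoLabelings {φ : Fin n → Fin α.length}
    (hφ : φ ∈ runMonoLabelings α U) {w : Equiv.Perm (Fin n)} (hw : Des w ⊆ U ∪ jumps φ) :
    ∃ u v, Des u ⊆ gapsInv α ∧ Des v ⊆ U ∧ α.index ∘ v = φ ∧ u * v = w := by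
  simp only [runMonoLabelings, mem_filter, mem_univ, true_and] at hφ
  obtain ⟨htype, hmono⟩ := hφ
  obtain ⟨u, hψ, hu⟩ := exists_equiv_comp_eq_fiberwiseStrictMono α.index (φ ∘ w.symm)
    fun j => by rw [α.card_index_fiber, htype.comp_perm w.symm j]
  have hidx : α.index ∘ (u⁻¹ * w) = φ := funext fun x => by
    simpa using (congrFun hψ (u.symm (w x))).symm
  refine ⟨u, u⁻¹ * w, des_subset_gapsInv_iff.2 hu, ?_, hidx, mul_inv_cancel_left u w⟩
  rw [des_subset_iff] at hw ⊢
  intro x y hrun hlt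
  by_cases hxy : φ x = φ y
  · have hwxy := hw (runIndex_union_jumps_eq hmono hlt.le hrun hxy) hlt
    exact hu.symm hψ (by simpa using hxy) hwxy
  · have hφxy := lt_of_le_of_ne (hmono x y hlt.le hrun) hxy
    rw [← hidx] at hφxy
    exact α.monotone_index.reflect_lt hφxy

end Bijection

section Expansion

variable {n : ℕ} (k : Type*) [CommRing k] (α : Composition n) (U : Finset ℕ)

/-- Solomon's Mackey formula: the pair `(u, v)` corresponds to the labelling `α.index ∘ v`
together with the product `u * v`. -/
theorem BComp_mul_BElt :
    BComp k α * BElt k n U = ∑ φ ∈ runMonoLabelings α U, BElt k n (U ∪ jumps φ) := by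
  simp only [BComp, BElt, sum_mul_sum, ← map_mul]
  rw [← sum_product', sum_sigma']
  refine sum_nbij (fun uv => ⟨α.index ∘ uv.2, uv.1 * uv.2⟩) ?_ ?_ ?_ (fun _ _ => rfl)
  · simp only [mem_product, mem_filter, mem_univ, true_and, mem_sigma]
    exact fun uv huv => ⟨index_comp_mem_runMonoLabelings huv.2, des_mul_subset huv.1 huv.2⟩
  · rintro ⟨u, v⟩ huv ⟨u', v'⟩ huv' h
    simp only [coe_product, coe_filter, mem_univ, true_and, Set.mem_prod, Set.mem_ofPred_eq]
      at huv huv'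
    simp only [Sigma.mk.injEq, heq_eq_eq] at h
    obtain ⟨rfl, rfl⟩ := eq_of_index_comp_eq_of_mul_eq huv.1 huv'.1 h.1 h.2
    rfl
  · rintro ⟨φ, w⟩ hφw
    simp only [coe_sigma, coe_filter, mem_univ, true_and, Set.mem_sigma_iff, Set.mem_ofPred_eq,
      mem_coe] at hφw
    obtain ⟨u, v, hu, hv, rfl, rfl⟩ := exists_mul_eq_of_mem_runMonoLabelings hφw.1 hφw.2
    exact ⟨(u, v), by simp [hu, hv], rfl⟩

theorem BComp_mul_BElt_eq_smul_add : ∃ L : Multiset (Finset ℕ),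
    (∀ T ∈ L, #(runConstLabelings α U) < #(runConstLabelings α T)) ∧
    BComp k α * BElt k n U = #(runConstLabelings α U) • BElt k n U + (L.map (BElt k n)).sum := by
  refine ⟨((runMonoLabelings α U).filter (¬ jumps · ⊆ U)).val.map (U ∪ jumps ·), ?_, ?_⟩
  · simp only [Multiset.mem_map, mem_val, mem_filter, runMonoLabelings, mem_univ, true_and]
    rintro _ ⟨φ, ⟨⟨hφ, -⟩, hU⟩, rfl⟩
    exact card_runConstLabelings_lt α hφ hU
  · rw [BComp_mul_BElt, ← sum_filter_add_sum_filter_not _ (jumps · ⊆ U),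
      sum_congr rfl fun φ hφ => by rw [union_eq_left.2 (mem_filter.1 hφ).2], sum_const,
      filter_runMonoLabelings_jumps_subset, Multiset.map_map]
    rfl

end Expansion

open Polynomial in
/-- Peel off the factor `a - ν i` and induct downwards on `ν i`, measured by
`#{j ∈ S | ν i ≤ j}`. -/
theorem aeval_prod_mul_eq_zero_of_triangular {R A ι : Type*} [CommRing R] [Ring A]
    [Algebra R A] {a : A} {b : ι → A} {ν : ι → ℕ} {S : Finset ℕ} (hS : ∀ i, ν i ∈ S)
    (htri : ∀ i, ∃ L : Multiset ι, (∀ t ∈ L, ν i < ν t) ∧ a * b i = ν i • b i + (L.map b).sum)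
    (i : ι) : aeval a (∏ j ∈ S, (X - C (j : R))) * b i = 0 := by
  suffices key : ∀ m i, #(S.filter (ν i ≤ ·)) = m →
      aeval a (∏ j ∈ S.filter (ν i ≤ ·), (X - C (j : R))) * b i = 0 by
    rw [← prod_filter_not_mul_prod_filter S (ν i ≤ ·), map_mul, mul_assoc, key _ i rfl,
      mul_zero]
  intro m
  induction m using Nat.strong_induction_on with
  | _ m ih =>
    intro i hm
    obtain ⟨L, hL, hab⟩ := htri i
    have hfilter : S.filter (ν i ≤ ·) = insert (ν i) (S.filter (ν i < ·)) := by
      ext j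
      simp only [mem_filter, mem_insert]
      constructor
      · rintro ⟨hj, hle⟩
        exact hle.eq_or_lt.imp (·.symm) (⟨hj, ·⟩)
      · rintro (rfl | ⟨hj, hlt⟩)
        exacts [⟨hS i, le_rfl⟩, ⟨hj, hlt.le⟩]
    have hstep : aeval a (X - C (ν i : R)) * b i = (L.map b).sum := by
      rw [map_sub, aeval_X, aeval_C, map_natCast, sub_mul, hab, ← nsmul_eq_mul,
        add_sub_cancel_left]
    rw [hfilter, prod_insert (by simp), mul_comm, map_mul, mul_assoc, hstep,
      ← Multiset.sum_map_mul_left]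
    refine Multiset.sum_eq_zero fun z hz => ?_
    obtain ⟨t, ht, rfl⟩ := Multiset.mem_map.1 hz
    have hsub : S.filter (ν t ≤ ·) ⊆ S.filter (ν i < ·) := fun j hj => by
      rw [mem_filter] at hj ⊢
      exact ⟨hj.1, (hL t ht).trans_le hj.2⟩
    have hlt : #(S.filter (ν t ≤ ·)) < m := by
      rw [← hm, hfilter, card_insert_of_notMem (by simp)]
      exact Nat.lt_succ_of_le (card_le_card hsub)
    rw [← prod_sdiff hsub, map_mul, mul_assoc, ih _ hlt t rfl, mul_zero]

lemma BElt_empty (k : Type*) [CommRing k] (n : ℕ) : BElt k n ∅ = 1 := by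
  simp [BElt, subset_empty, des_eq_empty_iff, filter_eq', MonoidAlgebra.one_def]

/-- Let `k` be a commutative ring and `α` a composition of `n`.  Then
`∏_{j ∈ n_α(CF)} (B_α - j·1) = 0` in `k[S_n]`, the product ranging over the distinct
elements `j` of the finite set `n_α(CF)` of knapsack numbers (encoded here as: for any
finite set `S` of natural numbers whose members are exactly the knapsack numbers
`n_α(F)` for `F ∈ CF`, the polynomial `∏_{j ∈ S} (x - j)` annihilates `B_α`). -/
theorem BComp_annihilated_by_knapsack_poly (k : Type*) [CommRing k] (n : ℕ)
    (α : Composition n) (S : Finset ℕ)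
    (hS : ∀ j : ℕ, j ∈ S ↔ ∃ F : SetComp n, knap α F = j) :
    Polynomial.aeval (BComp k α) (∏ j ∈ S, (Polynomial.X - Polynomial.C ((j : ℕ) : k))) = 0 := by
  have hknap : ∀ U, #(runConstLabelings α U) ∈ S := fun U =>
    (hS _).2 ⟨_, knap_ofFun_runIndexFin α U⟩
  have h := aeval_prod_mul_eq_zero_of_triangular (R := k) hknap
    (BComp_mul_BElt_eq_smul_add k α) ∅
  rwa [BElt_empty, mul_one] at h

end CardShuffle
end
end

section
/- Let α be a composition of n and let F, G be set compositions of [n]. Then: (a) if F ⊑ G then n_α(F) ≥ n_α(G); (b) n_α(FG) ≥ n_α(F) and n_α(FG) ≥ n_α(G); (c) if type G = α and F is not contained in G, then n_α(FG) > n_α(F); (d) n_α(F) = n_{rev α}(F). -/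
open scoped Classical

noncomputable section

namespace CardShuffle

/-!
Faces above `F` of type `α` form a set that shrinks as `F` grows, since `⊑` is transitive;
`FG ⊑ F` and `FG ⊑ G` then give (a) and (b), and in (c) the face `G` itself lies above `FG` but
not above `F`. For (d), reversing the order of the blocks is an involution on faces which keeps
`⊑` and reverses the type.
-/

namespace SetComp

variable {n : ℕ}

theorem blocks_injective : Function.Injective (blocks : SetComp n → List (Finset (Fin n))) := by
  rintro ⟨⟩ ⟨⟩ h
  congr

theorem blocks_nodup (F : SetComp n) : F.blocks.Nodup := by
  refine F.pairwiseDisjoint.imp_of_mem fun {B C} hB _ hBC hBeqC => ?_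
  subst hBeqC
  exact (F.nonempty B hB).ne_empty (disjoint_self.mp hBC)

instance : Finite (SetComp n) :=
  Finite.of_injective (fun F : SetComp n => (⟨F.blocks, F.blocks_nodup⟩ : {l // List.Nodup l}))
    fun _ _ h => blocks_injective (congrArg Subtype.val h)

theorem le.trans {F G H : SetComp n} (hFG : F.le G) (hGH : G.le H) : F.le H := by
  intro B hB
  obtain ⟨C, hC, hBC⟩ := hFG B hB
  obtain ⟨D, hD, hCD⟩ := hGH C hC
  exact ⟨D, hD, hBC.trans hCD⟩

theorem exists_eq_inter_of_mem_mul {F G : SetComp n} {S : Finset (Fin n)}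
    (hS : S ∈ (F.mul G).blocks) : ∃ B ∈ F.blocks, ∃ C ∈ G.blocks, S = B ∩ C := by
  simp only [mul, List.mem_filter, List.mem_flatten, List.mem_map] at hS
  obtain ⟨⟨_, ⟨B, hB, rfl⟩, hS⟩, -⟩ := hS
  obtain ⟨C, hC, rfl⟩ := List.mem_map.mp hS
  exact ⟨B, hB, C, hC, rfl⟩

theorem mul_le_left (F G : SetComp n) : (F.mul G).le F := by
  intro S hS
  obtain ⟨B, hB, C, -, rfl⟩ := exists_eq_inter_of_mem_mul hS
  exact ⟨B, hB, Finset.inter_subset_left⟩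

theorem mul_le_right (F G : SetComp n) : (F.mul G).le G := by
  intro S hS
  obtain ⟨B, -, C, hC, rfl⟩ := exists_eq_inter_of_mem_mul hS
  exact ⟨C, hC, Finset.inter_subset_right⟩

def rev (F : SetComp n) : SetComp n where
  blocks := F.blocks.reverse
  nonempty B hB := F.nonempty B (List.mem_reverse.mp hB)
  pairwiseDisjoint := List.pairwise_reverse.mpr (F.pairwiseDisjoint.imp fun h => h.symm)
  cover x := by
    obtain ⟨B, hB, hx⟩ := F.cover x
    exact ⟨B, List.mem_reverse.mpr hB, hx⟩

theorem rev_rev (F : SetComp n) : F.rev.rev = F :=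
  blocks_injective F.blocks.reverse_reverse

def revEquiv : SetComp n ≃ SetComp n := Function.Involutive.toPerm rev rev_rev

theorem typeList_rev (F : SetComp n) : F.rev.typeList = F.typeList.reverse :=
  List.map_reverse ..

theorem le_rev_iff {F G : SetComp n} : F.le G.rev ↔ F.le G := by
  simp [le, rev]

end SetComp

section Knapsack

variable {n : ℕ} (α : Composition n)

theorem knap_eq_ncard (F : SetComp n) :
    knap α F = {G : SetComp n | F.le G ∧ G.typeList = α.blocks}.ncard :=
  Nat.card_coe_set_eq _

theorem knap_antitone {F F' : SetComp n} (h : F.le F') : knap α F' ≤ knap α F := by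
  rw [knap_eq_ncard, knap_eq_ncard]
  exact Set.ncard_le_ncard (fun H ⟨hF'H, hH⟩ => ⟨h.trans hF'H, hH⟩) (Set.toFinite _)

theorem knap_lt_of_le_of_not_le {F F' G : SetComp n} (h : F'.le F) (hF'G : F'.le G)
    (hG : G.typeList = α.blocks) (hFG : ¬ F.le G) : knap α F < knap α F' := by
  rw [knap_eq_ncard, knap_eq_ncard]
  refine Set.ncard_lt_ncard ⟨fun H ⟨hFH, hH⟩ => ⟨h.trans hFH, hH⟩, fun hsub => ?_⟩
    (Set.toFinite _)
  exact hFG (hsub ⟨hF'G, hG⟩).1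

theorem knap_revComp (F : SetComp n) : knap α F = knap (revComp α) F :=
  Nat.card_congr <| SetComp.revEquiv.subtypeEquiv fun G => by
    change _ ↔ F.le G.rev ∧ G.rev.typeList = α.blocks.reverse
    rw [SetComp.le_rev_iff, SetComp.typeList_rev, List.reverse_inj]

end Knapsack

/-- Let `α` be a composition of `n` and `F, G` set compositions of
`[n]`.  Then: (a) if `F ⊑ G` then `n_α(F) ≥ n_α(G)`; (b) `n_α(FG) ≥ n_α(F)` and
`n_α(FG) ≥ n_α(G)`; (c) if `type G = α` and `F` is not contained in `G`, then
`n_α(FG) > n_α(F)`; (d) `n_α(F) = n_{rev α}(F)`. -/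
theorem knapsack_inequalities (n : ℕ) (α : Composition n) (F G : SetComp n) :
    (F.le G → knap α G ≤ knap α F) ∧
    (knap α F ≤ knap α (F.mul G) ∧ knap α G ≤ knap α (F.mul G)) ∧
    (G.typeList = α.blocks → ¬ F.le G → knap α F < knap α (F.mul G)) ∧
    (knap α F = knap (revComp α) F) :=
  ⟨knap_antitone α,
    ⟨knap_antitone α (F.mul_le_left G), knap_antitone α (F.mul_le_right G)⟩,
    knap_lt_of_le_of_not_le α (F.mul_le_left G) (F.mul_le_right G),
    knap_revComp α F⟩

end CardShuffle
end
end

section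
/- Let F be a set composition of [n]. Then Σ_{G ∈ CF, F ⊑ G} (−1)^{n−ℓ(G)} = (−1)^{n−ℓ(F)}, the sum ranging over all set compositions G of [n] containing F. -/
open scoped Classical

noncomputable section

namespace CardShuffle

/-!
A face `G ⊒ F` is determined by which blocks of `F` each of its blocks contains, so
`G ↦ (blocks of F inside each block of G)` is a length-preserving bijection from the faces
containing `F` onto the ordered set partitions of the `ℓ(F)` blocks of `F`. For ordered set
partitions `L` of a finite set `s` one has `∑ (-1)^ℓ(L) = (-1)^|s|`: splitting off the first
block `B` and inducting on `s \ B` turns the sum into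
`-(-1)^|s| ∑_{∅ ≠ B ⊆ s} (-1)^|B| = (-1)^|s|`.
-/

theorem neg_one_pow_sub_of_le {k m : ℕ} (h : k ≤ m) :
    (-1 : ℤ) ^ (m - k) = (-1) ^ m * (-1) ^ k := by
  rw [← pow_add, show m + k = m - k + 2 * k by omega, pow_add, pow_mul]
  simp

section OrderedPartition

variable {α : Type*}

structure IsOrderedPartition (s : Finset α) (L : List (Finset α)) : Prop where
  nonempty : ∀ B ∈ L, B.Nonempty
  pairwise_disjoint : L.Pairwise Disjoint
  subset : ∀ B ∈ L, B ⊆ s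
  cover : ∀ x ∈ s, ∃ B ∈ L, x ∈ B

theorem isOrderedPartition_nil_iff {s : Finset α} : IsOrderedPartition s [] ↔ s = ∅ := by
  refine ⟨fun h => Finset.eq_empty_of_forall_notMem fun x hx => ?_, ?_⟩
  · obtain ⟨B, hB, -⟩ := h.cover x hx
    simp at hB
  · rintro rfl
    exact ⟨by simp, by simp, by simp, by simp⟩

theorem isOrderedPartition_cons_iff [DecidableEq α] {s B : Finset α} {L : List (Finset α)} :
    IsOrderedPartition s (B :: L) ↔ B.Nonempty ∧ B ⊆ s ∧ IsOrderedPartition (s \ B) L := by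
  constructor
  · intro h
    have hdisj := List.pairwise_cons.mp h.pairwise_disjoint
    refine ⟨h.nonempty B (by simp), h.subset B (by simp),
      fun C hC => h.nonempty C (by simp [hC]), hdisj.2, fun C hC x hx => ?_, fun x hx => ?_⟩
    · exact Finset.mem_sdiff.mpr
        ⟨h.subset C (by simp [hC]) hx, Finset.disjoint_right.mp (hdisj.1 C hC) hx⟩
    · obtain ⟨C, hC, hxC⟩ := h.cover x (Finset.mem_sdiff.mp hx).1
      rcases List.mem_cons.mp hC with rfl | hC
      · exact absurd hxC (Finset.mem_sdiff.mp hx).2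
      · exact ⟨C, hC, hxC⟩
  · rintro ⟨hB, hBs, h⟩
    refine ⟨?_, ?_, ?_, fun x hx => ?_⟩
    · simpa [hB] using h.nonempty
    · refine List.pairwise_cons.mpr ⟨fun C hC => ?_, h.pairwise_disjoint⟩
      exact Finset.disjoint_left.mpr fun x hxB hxC =>
        (Finset.mem_sdiff.mp (h.subset C hC hxC)).2 hxB
    · simpa [hBs] using fun C hC => (h.subset C hC).trans Finset.sdiff_subset
    · by_cases hxB : x ∈ B
      · exact ⟨B, by simp, hxB⟩
      · obtain ⟨C, hC, hxC⟩ := h.cover x (Finset.mem_sdiff.mpr ⟨hx, hxB⟩)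
        exact ⟨C, List.mem_cons_of_mem _ hC, hxC⟩

theorem isOrderedPartition_empty_iff [DecidableEq α] {L : List (Finset α)} :
    IsOrderedPartition ∅ L ↔ L = [] := by
  refine ⟨fun h => ?_, fun h => h ▸ isOrderedPartition_nil_iff.mpr rfl⟩
  obtain _ | ⟨B, L⟩ := L
  · rfl
  · obtain ⟨hB, hBs, -⟩ := isOrderedPartition_cons_iff.mp h
    exact absurd (Finset.subset_empty.mp hBs) hB.ne_empty

theorem isOrderedPartition_iff_exists_cons [DecidableEq α] {s : Finset α}
    {L : List (Finset α)} (hs : s.Nonempty) :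
    IsOrderedPartition s L ↔
      ∃ B L', L = B :: L' ∧ (B.Nonempty ∧ B ⊆ s) ∧ IsOrderedPartition (s \ B) L' := by
  constructor
  · intro h
    obtain _ | ⟨B, L'⟩ := L
    · exact absurd (isOrderedPartition_nil_iff.mp h) hs.ne_empty
    · obtain ⟨hB, hBs, hL'⟩ := isOrderedPartition_cons_iff.mp h
      exact ⟨B, L', rfl, ⟨hB, hBs⟩, hL'⟩
  · rintro ⟨B, L', rfl, ⟨hB, hBs⟩, hL'⟩
    exact isOrderedPartition_cons_iff.mpr ⟨hB, hBs, hL'⟩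

theorem IsOrderedPartition.length_le_card [DecidableEq α] {s : Finset α} {L : List (Finset α)}
    (h : IsOrderedPartition s L) : L.length ≤ s.card := by
  induction L generalizing s with
  | nil => simp
  | cons B L ih =>
    obtain ⟨hB, hBs, hL⟩ := isOrderedPartition_cons_iff.mp h
    have := Finset.card_lt_card (Finset.sdiff_ssubset hBs hB)
    have := ih hL
    simp only [List.length_cons]
    omega

theorem mem_powerset_erase_empty [DecidableEq α] {s B : Finset α} :
    B ∈ s.powerset.erase ∅ ↔ B.Nonempty ∧ B ⊆ s := by
  simp [Finset.nonempty_iff_ne_empty]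

theorem sum_powerset_erase_empty_neg_one_pow_card [DecidableEq α] {s : Finset α}
    (hs : s.Nonempty) : ∑ B ∈ s.powerset.erase ∅, (-1 : ℤ) ^ B.card = -1 := by
  rw [Finset.sum_erase_eq_sub (Finset.empty_mem_powerset s),
    Finset.sum_powerset_neg_one_pow_card_of_nonempty hs]
  simp

theorem sum_neg_one_pow_length_of_isOrderedPartition [DecidableEq α] (s : Finset α)
    (T : Finset (List (Finset α))) (hT : ∀ L, L ∈ T ↔ IsOrderedPartition s L) :
    ∑ L ∈ T, (-1 : ℤ) ^ L.length = (-1) ^ s.card := by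
  induction s using Finset.strongInduction generalizing T with
  | H s ih =>
  rcases s.eq_empty_or_nonempty with rfl | hs
  · have hT_nil : T = {[]} := by
      ext L
      rw [hT, Finset.mem_singleton, isOrderedPartition_empty_iff]
    simp [hT_nil]
  set tails : Finset α → Finset (List (Finset α)) :=
    fun B => (T.image List.tail).filter (IsOrderedPartition (s \ B))
  have mem_tails : ∀ B, B.Nonempty ∧ B ⊆ s →
      ∀ L, L ∈ tails B ↔ IsOrderedPartition (s \ B) L := by
    refine fun B hB L => ⟨fun h => (Finset.mem_filter.mp h).2, fun h => ?_⟩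
    have hBL : IsOrderedPartition s (B :: L) := isOrderedPartition_cons_iff.mpr ⟨hB.1, hB.2, h⟩
    exact Finset.mem_filter.mpr ⟨Finset.mem_image.mpr ⟨B :: L, (hT _).mpr hBL, rfl⟩, h⟩
  have hT_split : T = ((s.powerset.erase ∅).sigma tails).image fun p => p.1 :: p.2 := by
    ext L
    rw [hT, isOrderedPartition_iff_exists_cons hs]
    simp only [Finset.mem_image, Finset.mem_sigma, Sigma.exists, mem_powerset_erase_empty]
    constructor
    · rintro ⟨B, L', rfl, hB, hL'⟩
      exact ⟨B, L', ⟨hB, (mem_tails B hB L').mpr hL'⟩, rfl⟩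
    · rintro ⟨B, L', ⟨hB, hL'⟩, rfl⟩
      exact ⟨B, L', rfl, hB, (mem_tails B hB L').mp hL'⟩
  have sum_tails : ∀ B ∈ s.powerset.erase ∅,
      ∑ L ∈ tails B, (-1 : ℤ) ^ (L.length + 1) = -((-1) ^ s.card * (-1) ^ B.card) := by
    intro B hB
    obtain ⟨hB_ne, hBs⟩ := mem_powerset_erase_empty.mp hB
    simp only [pow_succ, mul_neg_one, Finset.sum_neg_distrib]
    rw [ih (s \ B) (Finset.sdiff_ssubset hBs hB_ne) _ (mem_tails B ⟨hB_ne, hBs⟩),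
      Finset.card_sdiff_of_subset hBs, neg_one_pow_sub_of_le (Finset.card_le_card hBs)]
  rw [hT_split, Finset.sum_image fun p _ q _ h => by simpa [Sigma.ext_iff] using h,
    Finset.sum_sigma]
  simp only [List.length_cons]
  rw [Finset.sum_congr rfl sum_tails, Finset.sum_neg_distrib, ← Finset.mul_sum,
    sum_powerset_erase_empty_neg_one_pow_card hs]
  ring

end OrderedPartition

namespace SetComp

variable {n : ℕ}

theorem isOrderedPartition (G : SetComp n) : IsOrderedPartition Finset.univ G.blocks :=
  ⟨G.nonempty, G.pairwiseDisjoint, fun _ _ => Finset.subset_univ _, fun x _ => G.cover x⟩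

theorem len_le (G : SetComp n) : G.len ≤ n := by
  simpa using G.isOrderedPartition.length_le_card

theorem eq_of_mem_of_mem (G : SetComp n) {C C' : Finset (Fin n)} (hC : C ∈ G.blocks)
    (hC' : C' ∈ G.blocks) {x : Fin n} (hx : x ∈ C) (hx' : x ∈ C') : C = C' := by
  by_contra hne
  exact Finset.disjoint_left.mp (G.pairwiseDisjoint.forall hC hC' hne) hx hx'

theorem card_toFinset_blocks (G : SetComp n) : G.blocks.toFinset.card = G.len := by
  refine List.toFinset_card_of_nodup (G.pairwiseDisjoint.imp_of_mem fun hC _ hdisj heq => ?_)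
  obtain ⟨x, hx⟩ := G.nonempty _ hC
  exact Finset.disjoint_left.mp hdisj hx (heq ▸ hx)

def blocksWithin (F : SetComp n) (C : Finset (Fin n)) : Finset (Finset (Fin n)) :=
  F.blocks.toFinset.filter (· ⊆ C)

theorem mem_blocksWithin {F : SetComp n} {C B : Finset (Fin n)} :
    B ∈ F.blocksWithin C ↔ B ∈ F.blocks ∧ B ⊆ C := by
  simp [blocksWithin]

theorem biUnion_blocksWithin {F G : SetComp n} (hle : F.le G) {C : Finset (Fin n)}
    (hC : C ∈ G.blocks) : (F.blocksWithin C).biUnion id = C := by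
  ext x
  simp only [Finset.mem_biUnion, mem_blocksWithin, id]
  refine ⟨fun ⟨B, ⟨_, hBC⟩, hxB⟩ => hBC hxB, fun hxC => ?_⟩
  obtain ⟨B, hB, hxB⟩ := F.cover x
  obtain ⟨C', hC', hBC'⟩ := hle B hB
  obtain rfl := G.eq_of_mem_of_mem hC hC' hxC (hBC' hxB)
  exact ⟨B, ⟨hB, hBC'⟩, hxB⟩

theorem blocksWithin_biUnion {F : SetComp n} {t : Finset (Finset (Fin n))}
    (ht : t ⊆ F.blocks.toFinset) : F.blocksWithin (t.biUnion id) = t := by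
  ext B
  rw [mem_blocksWithin]
  refine ⟨fun ⟨hB, hBt⟩ => ?_, fun hBt => ⟨List.mem_toFinset.mp (ht hBt),
    Finset.subset_biUnion_of_mem id hBt⟩⟩
  obtain ⟨x, hx⟩ := F.nonempty B hB
  obtain ⟨B', hB't, hxB'⟩ := Finset.mem_biUnion.mp (hBt hx)
  rwa [F.eq_of_mem_of_mem hB (List.mem_toFinset.mp (ht hB't)) hx hxB']

theorem isOrderedPartition_map_blocksWithin {F G : SetComp n} (hle : F.le G) :
    IsOrderedPartition F.blocks.toFinset (G.blocks.map F.blocksWithin) := by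
  refine ⟨?_, ?_, ?_, ?_⟩
  · simp only [List.mem_map]
    rintro _ ⟨C, hC, rfl⟩
    have hne := G.nonempty C hC
    rw [← biUnion_blocksWithin hle hC, Finset.biUnion_nonempty] at hne
    obtain ⟨B, hB, -⟩ := hne
    exact ⟨B, hB⟩
  · refine List.pairwise_map.mpr (G.pairwiseDisjoint.imp fun hdisj => ?_)
    refine Finset.disjoint_left.mpr fun B hB hB' => ?_
    obtain ⟨hBF, hBC⟩ := mem_blocksWithin.mp hB
    obtain ⟨x, hx⟩ := F.nonempty B hBF
    exact Finset.disjoint_left.mp hdisj (hBC hx) ((mem_blocksWithin.mp hB').2 hx)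
  · simp only [List.mem_map]
    rintro _ ⟨C, -, rfl⟩
    exact Finset.filter_subset _ _
  · intro B hB
    obtain ⟨C, hC, hBC⟩ := hle B (List.mem_toFinset.mp hB)
    exact ⟨_, List.mem_map_of_mem hC, mem_blocksWithin.mpr ⟨List.mem_toFinset.mp hB, hBC⟩⟩

def merge (F : SetComp n) (M : List (Finset (Finset (Fin n))))
    (hM : IsOrderedPartition F.blocks.toFinset M) : SetComp n where
  blocks := M.map (·.biUnion id)
  nonempty := by
    simp only [List.mem_map]
    rintro _ ⟨t, ht, rfl⟩
    obtain ⟨B, hB⟩ := hM.nonempty t ht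
    exact (F.nonempty B (List.mem_toFinset.mp (hM.subset t ht hB))).mono
      (Finset.subset_biUnion_of_mem id hB)
  pairwiseDisjoint := by
    refine List.pairwise_map.mpr (hM.pairwise_disjoint.imp_of_mem fun ht ht' hdisj => ?_)
    refine (Finset.disjoint_biUnion_left _ _ _).mpr fun B hB =>
      (Finset.disjoint_biUnion_right _ _ _).mpr fun B' hB' =>
        Finset.disjoint_left.mpr fun x hx hx' => ?_
    obtain rfl := F.eq_of_mem_of_mem (List.mem_toFinset.mp (hM.subset _ ht hB))
      (List.mem_toFinset.mp (hM.subset _ ht' hB')) hx hx'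
    exact Finset.disjoint_left.mp hdisj hB hB'
  cover := by
    intro x
    obtain ⟨B, hB, hxB⟩ := F.cover x
    obtain ⟨t, ht, hBt⟩ := hM.cover B (List.mem_toFinset.mpr hB)
    exact ⟨_, List.mem_map_of_mem ht, Finset.mem_biUnion.mpr ⟨B, hBt, hxB⟩⟩

theorem le_merge (F : SetComp n) {M : List (Finset (Finset (Fin n)))}
    (hM : IsOrderedPartition F.blocks.toFinset M) : F.le (F.merge M hM) := by
  intro B hB
  obtain ⟨t, ht, hBt⟩ := hM.cover B (List.mem_toFinset.mpr hB)
  exact ⟨_, List.mem_map_of_mem ht, Finset.subset_biUnion_of_mem id hBt⟩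

theorem map_blocksWithin_merge (F : SetComp n) {M : List (Finset (Finset (Fin n)))}
    (hM : IsOrderedPartition F.blocks.toFinset M) :
    (F.merge M hM).blocks.map F.blocksWithin = M := by
  simp only [merge, List.map_map]
  conv_rhs => rw [← List.map_id M]
  exact List.map_congr_left fun t ht => blocksWithin_biUnion (hM.subset t ht)

theorem map_biUnion_map_blocksWithin {F G : SetComp n} (hle : F.le G) :
    (G.blocks.map F.blocksWithin).map (·.biUnion id) = G.blocks := by
  rw [List.map_map]
  conv_rhs => rw [← List.map_id G.blocks]
  exact List.map_congr_left fun C hC => biUnion_blocksWithin hle hC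

theorem sum_neg_one_pow_len_of_le (F : SetComp n) (S : Finset (SetComp n))
    (hS : ∀ G : SetComp n, G ∈ S ↔ F.le G) :
    ∑ G ∈ S, (-1 : ℤ) ^ G.len = (-1) ^ F.len := by
  set φ : SetComp n → List (Finset (Finset (Fin n))) := fun G => G.blocks.map F.blocksWithin
  have hφ_inj : Set.InjOn φ S := by
    intro G hG G' hG' h
    have hblocks : G.blocks = G'.blocks := calc
      G.blocks = (φ G).map (·.biUnion id) := (map_biUnion_map_blocksWithin ((hS G).mp hG)).symm
      _ = (φ G').map (·.biUnion id) := by rw [h]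
      _ = G'.blocks := map_biUnion_map_blocksWithin ((hS G').mp hG')
    cases G; cases G'; cases hblocks; rfl
  have mem_image_φ : ∀ M, M ∈ S.image φ ↔ IsOrderedPartition F.blocks.toFinset M := by
    refine fun M => ⟨?_, fun hM => ?_⟩
    · intro h
      obtain ⟨G, hG, rfl⟩ := Finset.mem_image.mp h
      exact isOrderedPartition_map_blocksWithin ((hS G).mp hG)
    · exact Finset.mem_image.mpr ⟨F.merge M hM, (hS _).mpr (F.le_merge hM),
        F.map_blocksWithin_merge hM⟩
  calc ∑ G ∈ S, (-1 : ℤ) ^ G.len = ∑ M ∈ S.image φ, (-1 : ℤ) ^ M.length := by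
        rw [Finset.sum_image hφ_inj]
        simp [φ]
    _ = (-1) ^ F.len := by
        rw [sum_neg_one_pow_length_of_isOrderedPartition _ _ mem_image_φ, card_toFinset_blocks]

end SetComp

/-- Let `F` be a set composition of `[n]`.  Then
`Σ_{G ∈ CF, F ⊑ G} (-1)^{n-ℓ(G)} = (-1)^{n-ℓ(F)}`, the sum ranging over all set
compositions `G` of `[n]` containing `F` (encoded via any finite set `S` whose members
are exactly the faces containing `F`). -/
theorem alternating_sum_over_containing_faces (n : ℕ) (F : SetComp n)
    (S : Finset (SetComp n)) (hS : ∀ G : SetComp n, G ∈ S ↔ F.le G) :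
    ∑ G ∈ S, (-1 : ℤ) ^ (n - G.len) = (-1) ^ (n - F.len) := by
  calc ∑ G ∈ S, (-1 : ℤ) ^ (n - G.len) = ∑ G ∈ S, (-1) ^ n * (-1) ^ G.len :=
        Finset.sum_congr rfl fun G _ => neg_one_pow_sub_of_le G.len_le
    _ = (-1) ^ n * (-1) ^ F.len := by rw [← Finset.mul_sum, F.sum_neg_one_pow_len_of_le S hS]
    _ = (-1) ^ (n - F.len) := (neg_one_pow_sub_of_le F.len_le).symm

end CardShuffle
end
end
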